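/- For τ in the upper half-plane ℍ = {τ ∈ ℂ : Im τ > 0} and z ∈ ℂ, one has θ_{1/2,0}(z/τ, −1/τ) = (−iτ)^{1/2} · exp(πi z²/τ) · θ_{0,1/2}(z, τ), where (−iτ)^{1/2} denotes the principal branch of the square root (note Re(−iτ) > 0). -/
import Mathlib

open Complex

/-- The theta function with characteristics `h, k`:
`θ_{h,k}(z, τ) = ∑_{n ∈ ℤ} exp(πi(n+h)²τ + 2πi(n+h)(z+k))`. -/
noncomputable def thetaChar (h k : ℝ) (z τ : ℂ) : ℂ :=
  ∑' n : ℤ,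
    Complex.exp ((Real.pi : ℂ) * I * ((n : ℂ) + (h : ℂ)) ^ 2 * τ +
      2 * (Real.pi : ℂ) * I * ((n : ℂ) + (h : ℂ)) * (z + (k : ℂ)))

lemma thetaChar_eq_A (z τ : ℂ) : thetaChar 0 (1 / 2) z τ = jacobiTheta₂ (z + 1 / 2) τ := by
  unfold thetaChar jacobiTheta₂ jacobiTheta₂_term
  refine tsum_congr fun n => ?_
  push_cast
  ring_nf

lemma thetaChar_eq_B (w σ : ℂ) : thetaChar (1 / 2) 0 w σ =
    Complex.exp ((Real.pi : ℂ) * I * σ / 4 + (Real.pi : ℂ) * I * w) *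
      jacobiTheta₂ (w + σ / 2) σ := by
  unfold thetaChar jacobiTheta₂ jacobiTheta₂_term
  rw [← tsum_mul_left]
  refine tsum_congr fun n => ?_
  rw [← Complex.exp_add]
  push_cast
  ring_nf

/-- Modular transformation: for `τ` in the upper half-plane and `z ∈ ℂ`,
`θ_{1/2,0}(z/τ, −1/τ) = (−iτ)^{1/2} · exp(πi z²/τ) · θ_{0,1/2}(z, τ)`,
with the principal branch of the square root. -/
theorem stmt9 (τ z : ℂ) (hτ : 0 < τ.im) :
    thetaChar (1 / 2) 0 (z / τ) (-1 / τ)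
      = (-I * τ) ^ ((1 : ℂ) / 2) * Complex.exp ((Real.pi : ℂ) * I * z ^ 2 / τ) *
          thetaChar 0 (1 / 2) z τ := by
  have h0 : τ ≠ 0 := by rintro rfl; simp at hτ
  have hp : (-I * τ) ^ ((1 : ℂ) / 2) ≠ 0 := by
    rw [Ne, Complex.cpow_eq_zero_iff]
    simp [h0, Complex.I_ne_zero]
  rw [thetaChar_eq_A, thetaChar_eq_B]
  have hz : z / τ + -1 / τ / 2 = (z - 1 / 2) / τ := by field_simp; ring
  have key : jacobiTheta₂ ((z - 1 / 2) / τ) (-1 / τ) =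
      (-I * τ) ^ ((1 : ℂ) / 2) * Complex.exp ((Real.pi : ℂ) * I * (z - 1 / 2) ^ 2 / τ) *
        jacobiTheta₂ (z - 1 / 2) τ := by
    have h := jacobiTheta₂_functional_equation (z - 1 / 2) τ
    rw [h]; symm
    have he : Complex.exp ((Real.pi : ℂ) * I * (z - 1 / 2) ^ 2 / τ) *
        Complex.exp (-(Real.pi : ℂ) * I * (z - 1 / 2) ^ 2 / τ) = 1 := by
      rw [← Complex.exp_add, show (Real.pi : ℂ) * I * (z - 1 / 2) ^ 2 / τ +
        -(Real.pi : ℂ) * I * (z - 1 / 2) ^ 2 / τ = 0 by ring, Complex.exp_zero]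
    calc (-I * τ) ^ ((1 : ℂ) / 2) * Complex.exp ((Real.pi : ℂ) * I * (z - 1 / 2) ^ 2 / τ) *
          (1 / (-I * τ) ^ ((1 : ℂ) / 2) * Complex.exp (-(Real.pi : ℂ) * I * (z - 1 / 2) ^ 2 / τ) *
            jacobiTheta₂ ((z - 1 / 2) / τ) (-1 / τ))
        = (Complex.exp ((Real.pi : ℂ) * I * (z - 1 / 2) ^ 2 / τ) *
            Complex.exp (-(Real.pi : ℂ) * I * (z - 1 / 2) ^ 2 / τ)) *
          ((-I * τ) ^ ((1 : ℂ) / 2) * ((-I * τ) ^ ((1 : ℂ) / 2))⁻¹) *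
            jacobiTheta₂ ((z - 1 / 2) / τ) (-1 / τ) := by rw [one_div]; ring
      _ = jacobiTheta₂ ((z - 1 / 2) / τ) (-1 / τ) := by
          rw [he, mul_inv_cancel₀ hp, one_mul, one_mul]
  have hper : jacobiTheta₂ (z - 1 / 2) τ = jacobiTheta₂ (z + 1 / 2) τ := by
    rw [← jacobiTheta₂_add_left (z - 1 / 2) τ]
    ring_nf
  rw [hz, key, hper]
  rw [show ((Real.pi : ℂ) * I * (-1 / τ) / 4 + (Real.pi : ℂ) * I * (z / τ)) = 
    (Real.pi : ℂ) * I * (-1 / τ) / 4 + (Real.pi : ℂ) * I * (z / τ) from rfl]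
  have hexp : Complex.exp ((Real.pi : ℂ) * I * (-1 / τ) / 4 + (Real.pi : ℂ) * I * (z / τ)) *
      Complex.exp ((Real.pi : ℂ) * I * (z - 1 / 2) ^ 2 / τ) =
      Complex.exp ((Real.pi : ℂ) * I * z ^ 2 / τ) := by
    rw [← Complex.exp_add]
    congr 1
    field_simp
    ring
  calc Complex.exp ((Real.pi : ℂ) * I * (-1 / τ) / 4 + (Real.pi : ℂ) * I * (z / τ)) *
        ((-I * τ) ^ ((1 : ℂ) / 2) * Complex.exp ((Real.pi : ℂ) * I * (z - 1 / 2) ^ 2 / τ) *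
          jacobiTheta₂ (z + 1 / 2) τ)
      = (-I * τ) ^ ((1 : ℂ) / 2) *
        (Complex.exp ((Real.pi : ℂ) * I * (-1 / τ) / 4 + (Real.pi : ℂ) * I * (z / τ)) *
          Complex.exp ((Real.pi : ℂ) * I * (z - 1 / 2) ^ 2 / τ)) *
          jacobiTheta₂ (z + 1 / 2) τ := by ring
    _ = _ := by rw [hexp]
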